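/- With TPR_d(y) = 1 − Φ((y√(2d) − Δ²)/√(2d + 4Δ²)) and FPR(y) = 1 − Φ(y), the scaled gap √d·(TPR_d(y) − FPR(y)) converges to Δ²·φ(y)/√2 as d → ∞, where φ is the standard normal density. -/

import Mathlib

open Real Filter MeasureTheory

/-- The standard normal CDF. -/
noncomputable def stdNormalCDF (z : ℝ) : ℝ :=
  ∫ u in Set.Iic z, (1 / Real.sqrt (2 * Real.pi)) * Real.exp (-u ^ 2 / 2)

/-- The standard normal density. -/
noncomputable def stdNormalPDF (z : ℝ) : ℝ :=
  (1 / Real.sqrt (2 * Real.pi)) * Real.exp (-z ^ 2 / 2)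

/-!
The gap is `Φ(y) - Φ(z_d)` with `z_d = (y√(2d) − Δ²)/√(2d + 4Δ²) → y`. Writing
`Φ(z_d) - Φ(y) = (z_d - y) · dslope Φ y z_d`, where `dslope Φ y` is continuous at `y` with value
`φ(y)`, the claim reduces to the elementary limit `√d · (z_d − y) → −Δ²/√2`.
-/

open Topology

theorem hasDerivAt_integral_Iic {E : Type*} [NormedAddCommGroup E] [NormedSpace ℝ E]
    [CompleteSpace E] {f : ℝ → E} (hf : Continuous f) (hfi : Integrable f) (y : ℝ) :
    HasDerivAt (fun z => ∫ u in Set.Iic z, f u) (f y) y := by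
  have hsplit : (fun z => ∫ u in Set.Iic z, f u) =
      fun z => (∫ u in Set.Iic 0, f u) + ∫ u in (0 : ℝ)..z, f u := by
    funext z
    rw [← intervalIntegral.integral_Iic_sub_Iic hfi.integrableOn hfi.integrableOn]
    abel
  rw [hsplit]
  exact (hf.integral_hasStrictDerivAt 0 y).hasDerivAt.const_add _

theorem stdNormalPDF_eq_gaussianPDFReal : stdNormalPDF = ProbabilityTheory.gaussianPDFReal 0 1 := by
  funext z
  simp [stdNormalPDF, ProbabilityTheory.gaussianPDFReal]

theorem hasDerivAt_stdNormalCDF (y : ℝ) : HasDerivAt stdNormalCDF (stdNormalPDF y) y :=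
  hasDerivAt_integral_Iic (f := stdNormalPDF) (by unfold stdNormalPDF; fun_prop)
    (stdNormalPDF_eq_gaussianPDFReal ▸ ProbabilityTheory.integrable_gaussianPDFReal 0 1) y

theorem HasDerivAt.tendsto_mul_sub {α : Type*} {l : Filter α} {F : ℝ → ℝ} {F' y L : ℝ}
    {s z : α → ℝ} (hF : HasDerivAt F F' y) (hs : Tendsto s l atTop)
    (hsz : Tendsto (fun t => s t * (z t - y)) l (𝓝 L)) :
    Tendsto (fun t => s t * (F (z t) - F y)) l (𝓝 (F' * L)) := by
  have hz : Tendsto z l (𝓝 y) := by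
    have h := hsz.mul hs.inv_tendsto_atTop
    rw [mul_zero] at h
    refine tendsto_sub_nhds_zero_iff.mp (h.congr' ?_)
    filter_upwards [hs.eventually_ne_atTop 0] with t ht
    rw [Pi.inv_apply, mul_comm, inv_mul_cancel_left₀ ht]
  have hdslope : Tendsto (fun t => dslope F y (z t)) l (𝓝 F') := by
    have hcont := (continuousAt_dslope_same.mpr hF.differentiableAt).tendsto
    rw [dslope_same, hF.deriv] at hcont
    exact hcont.comp hz
  refine (hdslope.mul hsz).congr fun t => ?_
  rw [← sub_smul_dslope F y (z t), smul_eq_mul]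
  ring

theorem tendsto_sqrt_add_sub_sqrt (b : ℝ) :
    Tendsto (fun x => √(x + b) - √x) atTop (𝓝 0) := by
  have hsum : Tendsto (fun x => √(x + b) + √x) atTop atTop :=
    (tendsto_sqrt_atTop.comp (tendsto_atTop_add_const_right _ b tendsto_id)).atTop_add_atTop
      tendsto_sqrt_atTop
  refine ((tendsto_const_nhds (x := b)).div_atTop hsum).congr' ?_
  filter_upwards [eventually_gt_atTop 0, eventually_gt_atTop (-b)] with x hx hxb
  have hpos : 0 < √(x + b) + √x := by positivity
  field_simp
  rw [← sq_sub_sq, sq_sqrt (by linarith), sq_sqrt hx.le]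
  ring

theorem tendsto_sqrt_div_sqrt_two_mul_add (b : ℝ) :
    Tendsto (fun x => √x / √(2 * x + b)) atTop (𝓝 (√2)⁻¹) := by
  have h : Tendsto (fun x => (√(2 + b / x))⁻¹) atTop (𝓝 (√2)⁻¹) := by
    have := ((tendsto_const_nhds (x := (2 : ℝ))).add
      ((tendsto_const_nhds (x := b)).div_atTop tendsto_id)).sqrt.inv₀ (by positivity)
    simpa using this
  refine h.congr' ?_
  filter_upwards [eventually_gt_atTop 0] with x hx
  rw [show 2 + b / x = (2 * x + b) / x by field_simp, sqrt_div' _ hx.le, inv_div]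

theorem tendsto_sqrt_mul_div_sqrt_sub (y a b : ℝ) :
    Tendsto (fun d => √d * ((y * √(2 * d) - a) / √(2 * d + b) - y)) atTop (𝓝 (-a / √2)) := by
  have hgap : Tendsto (fun d => √(2 * d + b) - √(2 * d)) atTop (𝓝 0) :=
    (tendsto_sqrt_add_sub_sqrt b).comp (tendsto_id.const_mul_atTop two_pos)
  have h := (tendsto_sqrt_div_sqrt_two_mul_add b).mul
    ((hgap.const_mul y).neg.sub_const a)
  rw [mul_zero, neg_zero, zero_sub, ← div_eq_inv_mul] at h
  refine h.congr' ?_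
  filter_upwards [eventually_gt_atTop (-b / 2)] with d hd
  have hpos : 0 < √(2 * d + b) := sqrt_pos.mpr (by linarith)
  field_simp
  ring

/-- with `TPR_d(y) = 1 − Φ((y√(2d) − Δ²)/√(2d + 4Δ²))` and
`FPR(y) = 1 − Φ(y)`, the scaled gap `√d·(TPR_d(y) − FPR(y))` converges to
`Δ²·φ(y)/√2` as `d → ∞`. -/
theorem stmt_15 (y Δ : ℝ) :
    Tendsto (fun d : ℝ =>
        Real.sqrt d *
          ((1 - stdNormalCDF ((y * Real.sqrt (2 * d) - Δ ^ 2) / Real.sqrt (2 * d + 4 * Δ ^ 2))) -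
            (1 - stdNormalCDF y)))
      atTop (nhds (Δ ^ 2 * stdNormalPDF y / Real.sqrt 2)) := by
  have h := ((hasDerivAt_stdNormalCDF y).const_sub 1).tendsto_mul_sub tendsto_sqrt_atTop
    (tendsto_sqrt_mul_div_sqrt_sub y (Δ ^ 2) (4 * Δ ^ 2))
  convert h using 2
  ring
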